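/- arXiv:1910.03630 — 2 statements merged into one kernel-verified Lean document; each statement's English description precedes it below -/
import Mathlib

section
/- Let X_1, X_2, ... be iid geometric random variables with success probability p = 1 - q ∈ (0,1) (taking values in {1,2,...} with P(X=k)=q^{k-1}p). Then for 1 ≤ k_1 < k_2 < ... < k_n, the joint mass function of the first n strong record values is P(X^{(1)}=k_1,...,X^{(n)}=k_n) = (p/q)^n q^{k_n}; consequently the record increments X^{(j)} - X^{(j-1)} (with X^{(0)} = 0) are iid geometric with parameter p. -/
open MeasureTheory ProbabilityTheory Set Real
open scoped ENNReal

/-- Strong upper record times of the sequence `X` (indexed from 1, `U 1 = 1`):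
`U (n+1) = inf {j > U n : X j > X (U n)}`, with value `⊤` if no such `j` exists. -/
noncomputable def recTime {Ω : Type*} (X : ℕ → Ω → ℝ) : ℕ → Ω → ℕ∞
  | 0, _ => 0
  | 1, _ => 1
  | (n+2), ω => sInf {j : ℕ∞ | ∃ m k : ℕ, recTime X (n+1) ω = (m : ℕ∞) ∧
      j = (k : ℕ∞) ∧ m < k ∧ X m ω < X k ω}

/-- Strong upper record values: `X⁽ⁿ⁾ = X_{U(n)}` (junk value if `U(n) = ⊤`). -/
noncomputable def recValue {Ω : Type*} (X : ℕ → Ω → ℝ) (n : ℕ) (ω : Ω) : ℝ :=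
  X (WithTop.untopD 0 (recTime X n ω)) ω

set_option linter.unusedSectionVars false

namespace S18

variable {Ω : Type*} [MeasureSpace Ω] [IsProbabilityMeasure (ℙ : Measure Ω)]
variable (X : ℕ → Ω → ℝ)

/-- the joint event that the first `n` record values are `k 1 < k 2 < ⋯ < k n`. -/
def Aset (k : ℕ → ℕ) (n : ℕ) : Set Ω :=
  ⋂ j ∈ Finset.Icc 1 n, {ω | ∃ m : ℕ, recTime X j ω = (m : ℕ∞) ∧ X m ω = (k j : ℝ)}

def Dset (k : ℕ → ℕ) (n m : ℕ) : Set Ω :=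
  Aset X k n ∩ {ω | recTime X n ω = (m : ℕ∞)}

def Fset (m m' a b : ℕ) : Set Ω :=
  (⋂ i ∈ Finset.Ioo m m', X i ⁻¹' Set.Iic (a : ℝ)) ∩ X m' ⁻¹' {(b : ℝ)}

lemma recTime_succ_succ (n : ℕ) (ω : Ω) :
    recTime X (n+2) ω = sInf {j : ℕ∞ | ∃ m k : ℕ, recTime X (n+1) ω = (m : ℕ∞) ∧
      j = (k : ℕ∞) ∧ m < k ∧ X m ω < X k ω} := rfl

lemma sInf_attained {S : Set ℕ∞} (hS : ∀ j ∈ S, ∃ t : ℕ, j = (t : ℕ∞)) {m : ℕ}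
    (h : sInf S = (m : ℕ∞)) : (m : ℕ∞) ∈ S := by
  have hne : S.Nonempty := by
    by_contra hc
    rw [Set.not_nonempty_iff_eq_empty] at hc
    subst hc
    rw [show sInf (∅ : Set ℕ∞) = ⊤ from sInf_empty] at h
    exact (ENat.coe_ne_top m) h.symm
  obtain ⟨j0, hj0⟩ := hne
  obtain ⟨t0, rfl⟩ := hS j0 hj0
  have hTne : {t : ℕ | (t : ℕ∞) ∈ S}.Nonempty := ⟨t0, hj0⟩
  have hmem : ((sInf {t : ℕ | (t : ℕ∞) ∈ S} : ℕ) : ℕ∞) ∈ S := Nat.sInf_mem hTne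
  have hlb : ∀ j ∈ S, ((sInf {t : ℕ | (t : ℕ∞) ∈ S} : ℕ) : ℕ∞) ≤ j := by
    intro j hj
    obtain ⟨t, rfl⟩ := hS j hj
    exact_mod_cast Nat.sInf_le hj
  have heq : sInf S = ((sInf {t : ℕ | (t : ℕ∞) ∈ S} : ℕ) : ℕ∞) :=
    le_antisymm (sInf_le hmem) (le_sInf hlb)
  rw [h] at heq
  rwa [heq]

lemma Aset_one (k : ℕ → ℕ) : Aset X k 1 = X 1 ⁻¹' {(k 1 : ℝ)} := by
  ext ω
  simp only [Aset, Finset.Icc_self, Finset.mem_singleton, Set.mem_iInter, Set.mem_setOf_eq]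
  constructor
  · intro h
    obtain ⟨m, hm, hx⟩ := h 1 rfl
    have : m = 1 := by
      have : ((1 : ℕ) : ℕ∞) = (m : ℕ∞) := hm
      exact_mod_cast this.symm
    subst this
    exact hx
  · intro h j hj
    subst hj
    exact ⟨1, rfl, h⟩

lemma recTime_one_eq (m : ℕ) :
    {ω : Ω | recTime X 1 ω = (m : ℕ∞)} = if m = 1 then Set.univ else (∅ : Set Ω) := by
  by_cases h : m = 1
  · subst h
    simp only [if_pos rfl]
    ext ω; simp [recTime]
  · simp only [if_neg h]
    ext ω
    simp only [Set.mem_setOf_eq, Set.mem_empty_iff_false, iff_false]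
    intro hc
    have h2 : ((1 : ℕ) : ℕ∞) = (m : ℕ∞) := hc
    exact h (by exact_mod_cast h2.symm)

lemma Dset_one (k : ℕ → ℕ) (m : ℕ) :
    Dset X k 1 m = if m = 1 then X 1 ⁻¹' {(k 1 : ℝ)} else ∅ := by
  rw [Dset, Aset_one, recTime_one_eq]
  by_cases h : m = 1 <;> simp [h]

lemma mem_Aset_value {k : ℕ → ℕ} {n j : ℕ} (hj : 1 ≤ j) (hjn : j ≤ n) {ω : Ω}
    (hA : ω ∈ Aset X k n) :
    ∃ m : ℕ, recTime X j ω = (m : ℕ∞) ∧ X m ω = (k j : ℝ) := by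
  have := Set.mem_iInter₂.mp hA j (Finset.mem_Icc.mpr ⟨hj, hjn⟩)
  exact this

lemma Aset_mono {k : ℕ → ℕ} {n n' : ℕ} (h : n ≤ n') : Aset X k n' ⊆ Aset X k n := by
  intro ω hω
  apply Set.mem_iInter₂.mpr
  intro j hj
  exact Set.mem_iInter₂.mp hω j (Finset.mem_Icc.mpr
    ⟨(Finset.mem_Icc.mp hj).1, le_trans (Finset.mem_Icc.mp hj).2 h⟩)

/-- Structural decomposition of `Dset` at level `n+1`. -/
lemma Dset_succ (k : ℕ → ℕ) (n : ℕ) (hn : 1 ≤ n) (hkn : k n < k (n+1)) (m' : ℕ) :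
    Dset X k (n+1) m' =
      ⋃ m, ⋃ (_ : m < m'), Dset X k n m ∩ Fset X m m' (k n) (k (n+1)) := by
  obtain ⟨t, rfl⟩ : ∃ t, n = t + 1 := ⟨n - 1, by omega⟩
  ext ω
  simp only [Set.mem_iUnion]
  constructor
  · rintro ⟨hA, hU⟩
    have hU' : recTime X (t+1+1) ω = (m' : ℕ∞) := hU
    have hAn : ω ∈ Aset X k (t+1) := Aset_mono X (by omega) hA
    obtain ⟨m, hUm, hXm⟩ := mem_Aset_value X (by omega) (le_refl _) hAn
    obtain ⟨m1, hU1, hX1⟩ := mem_Aset_value X (by omega) (le_refl _) hA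
    obtain rfl : m' = m1 := by
      rw [hU'] at hU1
      exact_mod_cast hU1
    rw [recTime_succ_succ] at hU'
    have hattain := sInf_attained (S := {j : ℕ∞ | ∃ m₀ k₀ : ℕ,
        recTime X (t+1) ω = (m₀ : ℕ∞) ∧ j = (k₀ : ℕ∞) ∧ m₀ < k₀ ∧ X m₀ ω < X k₀ ω})
      (by rintro j ⟨m₀, k₀, _, rfl, _⟩; exact ⟨k₀, rfl⟩) hU'
    obtain ⟨m₀, k₀, hm₀, hcast, hlt, hXlt⟩ := hattain
    have e1 : m₀ = m := by rw [hUm] at hm₀; exact_mod_cast hm₀.symm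
    have e2 : k₀ = m' := by exact_mod_cast hcast.symm
    rw [e1, e2] at hlt
    refine ⟨m, hlt, ⟨hAn, hUm⟩, ?_, hX1⟩
    -- intermediate values are small
    apply Set.mem_iInter₂.mpr
    intro i hi
    rw [Finset.mem_Ioo] at hi
    simp only [Set.mem_preimage, Set.mem_Iic]
    by_contra hbig
    push_neg at hbig
    have hiS : ((i : ℕ∞) ∈ {j : ℕ∞ | ∃ m₁ k₁ : ℕ,
        recTime X (t+1) ω = (m₁ : ℕ∞) ∧ j = (k₁ : ℕ∞) ∧ m₁ < k₁ ∧ X m₁ ω < X k₁ ω}) :=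
      ⟨m, i, hUm, rfl, hi.1, by rw [hXm]; exact hbig⟩
    have : (m' : ℕ∞) ≤ (i : ℕ∞) := hU' ▸ sInf_le hiS
    have : m' ≤ i := by exact_mod_cast this
    omega
  · rintro ⟨m, hmm', ⟨⟨hAn, hUm⟩, hF⟩⟩
    obtain ⟨hmid, hXm'⟩ := hF
    obtain ⟨m₂, hU2, hX2⟩ := mem_Aset_value X (by omega) (le_refl _) hAn
    obtain rfl : m = m₂ := by rw [hUm] at hU2; exact_mod_cast hU2
    simp only [Set.mem_preimage, Set.mem_singleton_iff] at hXm'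
    have hXmval : X m ω = (k (t+1) : ℝ) := hX2
    have hkcast : (k (t+1) : ℝ) < (k (t+1+1) : ℝ) := by exact_mod_cast hkn
    -- compute the record time at level t+2
    have hUnew : recTime X (t+1+1) ω = (m' : ℕ∞) := by
      rw [recTime_succ_succ]
      apply IsLeast.csInf_eq
      constructor
      · exact ⟨m, m', hUm, rfl, hmm', by rw [hXmval, hXm']; exact hkcast⟩
      · rintro j ⟨m₁, k₁, hm₁, rfl, hlt₁, hXlt₁⟩
        obtain rfl : m = m₁ := by rw [hUm] at hm₁; exact_mod_cast hm₁
        by_contra hc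
        push_neg at hc
        have hk₁m' : k₁ < m' := by exact_mod_cast hc
        have hk₁mem : k₁ ∈ Finset.Ioo m m' := Finset.mem_Ioo.mpr ⟨hlt₁, hk₁m'⟩
        have := Set.mem_iInter₂.mp hmid k₁ hk₁mem
        simp only [Set.mem_preimage, Set.mem_Iic] at this
        rw [hXmval] at hXlt₁
        exact absurd (lt_of_lt_of_le hXlt₁ this) (lt_irrefl _)
    constructor
    · -- ω ∈ Aset (t+2)
      apply Set.mem_iInter₂.mpr
      intro j hj
      rw [Finset.mem_Icc] at hj
      rcases Nat.lt_or_ge j (t+2) with hj2 | hj2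
      · exact Set.mem_iInter₂.mp hAn j (Finset.mem_Icc.mpr ⟨hj.1, by omega⟩)
      · have : j = t + 2 := by omega
        subst this
        exact ⟨m', hUnew, hXm'⟩
    · exact hUnew


section Measures

variable {p q : ℝ}

/-- the σ-algebra generated by the first `m` variables -/
def filt (m : ℕ) : MeasurableSpace Ω :=
  ⨆ i ∈ Set.Iic m, MeasurableSpace.comap (X i) inferInstance

lemma filt_le (hX : ∀ i, Measurable (X i)) (m : ℕ) :
    filt X m ≤ (inferInstance : MeasurableSpace Ω) :=
  iSup₂_le fun i _ => (hX i).comap_le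

lemma filt_mono {m m' : ℕ} (h : m ≤ m') : filt X m ≤ filt X m' :=
  iSup₂_le fun i hi => le_iSup₂ (f := fun i (_ : i ∈ Set.Iic m') =>
    MeasurableSpace.comap (X i) inferInstance) i (le_trans hi h)

lemma preimage_mem_filt {i m : ℕ} (him : i ≤ m) {B : Set ℝ} (hB : MeasurableSet B) :
    MeasurableSet[filt X m] (X i ⁻¹' B) :=
  le_iSup₂ (f := fun i (_ : i ∈ Set.Iic m) => MeasurableSpace.comap (X i) inferInstance)
    i him _ ⟨B, hB, rfl⟩

def upfilt (m : ℕ) : MeasurableSpace Ω :=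
  ⨆ i ∈ (Set.Iic m)ᶜ, MeasurableSpace.comap (X i) inferInstance

lemma preimage_mem_upfilt {i m : ℕ} (him : m < i) {B : Set ℝ} (hB : MeasurableSet B) :
    MeasurableSet[upfilt X m] (X i ⁻¹' B) :=
  le_iSup₂ (f := fun i (_ : i ∈ (Set.Iic m)ᶜ) => MeasurableSpace.comap (X i) inferInstance)
    i (by simpa using him) _ ⟨B, hB, rfl⟩

lemma Fset_mem_upfilt {m m' a b : ℕ} (hmm' : m < m') :
    MeasurableSet[upfilt X m] (Fset X m m' a b) := by
  apply MeasurableSet.inter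
  · apply MeasurableSet.biInter (Set.to_countable _)
    intro i hi
    exact preimage_mem_upfilt X (Finset.mem_Ioo.mp hi).1 measurableSet_Iic
  · exact preimage_mem_upfilt X hmm' (measurableSet_singleton _)

lemma Dset_mem_filt (k : ℕ → ℕ) (hkmono : ∀ j, 1 ≤ j → k j < k (j+1)) :
    ∀ n, 1 ≤ n → ∀ m, MeasurableSet[filt X m] (Dset X k n m) := by
  intro n
  induction n with
  | zero => omega
  | succ n ih =>
    intro _ m'
    rcases Nat.lt_or_ge n 1 with hn | hn
    · -- n = 0, base case
      obtain rfl : n = 0 := by omega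
      rw [Dset_one]
      by_cases h : m' = 1
      · rw [if_pos h]
        exact preimage_mem_filt X (by omega) (measurableSet_singleton _)
      · rw [if_neg h]; exact @MeasurableSet.empty _ (filt X m')
    · rw [Dset_succ X k n hn (hkmono n hn) m']
      apply MeasurableSet.iUnion
      intro m
      apply MeasurableSet.iUnion
      intro hmm'
      apply MeasurableSet.inter
      · exact filt_mono X (le_of_lt hmm') _ (ih hn m)
      · apply MeasurableSet.inter
        · apply MeasurableSet.biInter (Set.to_countable _)
          intro i hi
          exact preimage_mem_filt X (le_of_lt (Finset.mem_Ioo.mp hi).2) measurableSet_Iic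
        · exact preimage_mem_filt X (le_refl _) (measurableSet_singleton _)

lemma Dset_measurable (hX : ∀ i, Measurable (X i)) (k : ℕ → ℕ)
    (hkmono : ∀ j, 1 ≤ j → k j < k (j+1)) {n : ℕ} (hn : 1 ≤ n) (m : ℕ) :
    MeasurableSet (Dset X k n m) :=
  filt_le X hX m _ (Dset_mem_filt X k hkmono n hn m)

lemma Dset_disjoint (k : ℕ → ℕ) (n : ℕ) :
    Pairwise (Function.onFun Disjoint fun m => Dset X k n m) := by
  intro m1 m2 hne
  rw [Function.onFun, Set.disjoint_left]
  rintro ω ⟨_, h1⟩ ⟨_, h2⟩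
  rw [Set.mem_setOf_eq] at h1 h2
  rw [h1] at h2
  exact hne (by exact_mod_cast h2)

lemma Aset_eq_iUnion (k : ℕ → ℕ) {n : ℕ} (hn : 1 ≤ n) :
    Aset X k n = ⋃ m, Dset X k n m := by
  ext ω
  simp only [Set.mem_iUnion]
  constructor
  · intro hA
    obtain ⟨m, hm, _⟩ := mem_Aset_value X hn (le_refl n) hA
    exact ⟨m, hA, hm⟩
  · rintro ⟨m, hA, _⟩
    exact hA

lemma indep_filt (hX : ∀ i, Measurable (X i))
    (hindep : iIndepFun X ℙ) (m : ℕ) :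
    Indep (filt X m) (upfilt X m) ℙ :=
  indep_biSup_compl (fun i => (hX i).comap_le) hindep.iIndep (Set.Iic m)

lemma measure_Dset_inter_Fset (hX : ∀ i, Measurable (X i))
    (hindep : iIndepFun X ℙ) (k : ℕ → ℕ)
    (hkmono : ∀ j, 1 ≤ j → k j < k (j+1)) {n : ℕ} (hn : 1 ≤ n) {m m' : ℕ} (hmm' : m < m')
    (a b : ℕ) :
    ℙ (Dset X k n m ∩ Fset X m m' a b) = ℙ (Dset X k n m) * ℙ (Fset X m m' a b) :=
  (Indep_iff _ _ _).1 (indep_filt X hX hindep m) _ _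
    (Dset_mem_filt X k hkmono n hn m) (Fset_mem_upfilt X hmm')

end Measures


section Laws

variable {p q : ℝ}

lemma hq0 (hp1 : p < 1) (hq : q = 1 - p) : 0 < q := by rw [hq]; linarith
lemma hq1 (hp : 0 < p) (hq : q = 1 - p) : q < 1 := by rw [hq]; linarith

lemma geom_sum_Icc (hq : q = 1 - p) (c : ℕ) :
    ∑ t ∈ Finset.Icc 1 c, q ^ (t - 1) * p = 1 - q ^ c := by
  induction c with
  | zero => simp
  | succ c ih =>
    rw [Finset.sum_Icc_succ_top (by omega), ih]
    have hc1 : c + 1 - 1 = c := by omega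
    rw [hc1, hq, pow_succ]
    ring

lemma measure_preimage_singleton
    (hlaw : ∀ i, ∀ c : ℕ, 1 ≤ c →
      ℙ {ω : Ω | X i ω = (c : ℝ)} = ENNReal.ofReal (q ^ (c - 1) * p))
    (i : ℕ) {c : ℕ} (hc : 1 ≤ c) :
    ℙ (X i ⁻¹' {(c : ℝ)}) = ENNReal.ofReal (q ^ (c - 1) * p) := hlaw i c hc

lemma measure_preimage_Iic (hp : 0 < p) (hp1 : p < 1) (hq : q = 1 - p)
    (hlaw : ∀ i, ∀ c : ℕ, 1 ≤ c →
      ℙ {ω : Ω | X i ω = (c : ℝ)} = ENNReal.ofReal (q ^ (c - 1) * p))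
    (hsupp : ∀ i, ℙ {ω : Ω | ∃ c : ℕ, 1 ≤ c ∧ X i ω = (c : ℝ)} = 1)
    (hX : ∀ i, Measurable (X i)) (i : ℕ) {c : ℕ} (hc : 1 ≤ c) :
    ℙ (X i ⁻¹' Set.Iic (c : ℝ)) = ENNReal.ofReal (1 - q ^ c) := by
  have hU : ℙ (⋃ t ∈ Finset.Icc 1 c, X i ⁻¹' {(t : ℝ)}) = ENNReal.ofReal (1 - q ^ c) := by
    rw [measure_biUnion_finset]
    · have h0q : 0 < q := hq0 hp1 hq
      calc ∑ t ∈ Finset.Icc 1 c, ℙ (X i ⁻¹' {(t : ℝ)})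
          = ∑ t ∈ Finset.Icc 1 c, ENNReal.ofReal (q ^ (t - 1) * p) :=
            Finset.sum_congr rfl fun t ht =>
              measure_preimage_singleton X hlaw i (Finset.mem_Icc.mp ht).1
        _ = ENNReal.ofReal (∑ t ∈ Finset.Icc 1 c, q ^ (t - 1) * p) :=
            (ENNReal.ofReal_sum_of_nonneg fun t _ => by positivity).symm
        _ = ENNReal.ofReal (1 - q ^ c) := by rw [geom_sum_Icc (p := p) hq c]
    · intro t1 ht1 t2 ht2 hne
      rw [Function.onFun, Set.disjoint_left]
      intro ω h1 h2
      simp only [Set.mem_preimage, Set.mem_singleton_iff] at h1 h2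
      rw [h1] at h2
      exact hne (by exact_mod_cast h2)
    · intro t _
      exact (hX i) (measurableSet_singleton _)
  have hsuppmeas : MeasurableSet {ω : Ω | ∃ c : ℕ, 1 ≤ c ∧ X i ω = (c : ℝ)} := by
    have : {ω : Ω | ∃ c : ℕ, 1 ≤ c ∧ X i ω = (c : ℝ)}
        = ⋃ t : ℕ, ⋃ (_ : 1 ≤ t), X i ⁻¹' {(t : ℝ)} := by
      ext ω; simp [Set.mem_iUnion, eq_comm]
    rw [this]
    exact MeasurableSet.iUnion fun t => MeasurableSet.iUnion fun _ =>
      (hX i) (measurableSet_singleton _)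
  have hnull : ℙ {ω : Ω | ∃ c : ℕ, 1 ≤ c ∧ X i ω = (c : ℝ)}ᶜ = 0 := by
    rw [measure_compl hsuppmeas (measure_ne_top _ _), hsupp i, measure_univ, tsub_self]
  have hsplit : X i ⁻¹' Set.Iic (c : ℝ) = (⋃ t ∈ Finset.Icc 1 c, X i ⁻¹' {(t : ℝ)}) ∪
      (X i ⁻¹' Set.Iic (c : ℝ) ∩ {ω : Ω | ∃ c : ℕ, 1 ≤ c ∧ X i ω = (c : ℝ)}ᶜ) := by
    ext ω
    simp only [Set.mem_union, Set.mem_iUnion, Set.mem_preimage, Set.mem_Iic,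
      Set.mem_singleton_iff, Set.mem_inter_iff, Set.mem_compl_iff, Set.mem_setOf_eq,
      Finset.mem_Icc]
    constructor
    · intro hle
      by_cases hs : ∃ t : ℕ, 1 ≤ t ∧ X i ω = (t : ℝ)
      · obtain ⟨t, ht1, htx⟩ := hs
        have : t ≤ c := by
          rw [htx] at hle
          exact_mod_cast hle
        exact Or.inl ⟨t, ⟨ht1, this⟩, htx⟩
      · exact Or.inr ⟨hle, hs⟩
    · rintro (⟨t, ⟨_, htc⟩, htx⟩ | ⟨hle, _⟩)
      · rw [htx]
        exact_mod_cast htc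
      · exact hle
  have hnull2 : ℙ (X i ⁻¹' Set.Iic (c : ℝ) ∩ {ω : Ω | ∃ c : ℕ, 1 ≤ c ∧ X i ω = (c : ℝ)}ᶜ) = 0 :=
    measure_mono_null Set.inter_subset_right hnull
  rw [hsplit, ← hU]
  apply le_antisymm
  · calc ℙ ((⋃ t ∈ Finset.Icc 1 c, X i ⁻¹' {(t : ℝ)}) ∪ _) ≤ _ + _ := measure_union_le _ _
      _ = ℙ (⋃ t ∈ Finset.Icc 1 c, X i ⁻¹' {(t : ℝ)}) := by rw [hnull2, add_zero]
  · exact measure_mono Set.subset_union_left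

lemma measure_Fset (hp : 0 < p) (hp1 : p < 1) (hq : q = 1 - p)
    (hindep : iIndepFun X ℙ)
    (hlaw : ∀ i, ∀ c : ℕ, 1 ≤ c →
      ℙ {ω : Ω | X i ω = (c : ℝ)} = ENNReal.ofReal (q ^ (c - 1) * p))
    (hsupp : ∀ i, ℙ {ω : Ω | ∃ c : ℕ, 1 ≤ c ∧ X i ω = (c : ℝ)} = 1)
    (hX : ∀ i, Measurable (X i)) {m m' a b : ℕ} (hmm' : m < m') (ha : 1 ≤ a) (hb : 1 ≤ b) :
    ℙ (Fset X m m' a b) = ENNReal.ofReal ((1 - q ^ a) ^ (m' - m - 1) * (q ^ (b - 1) * p)) := by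
  classical
  have h0q : 0 < q := hq0 hp1 hq
  have hq1' : q < 1 := hq1 hp hq
  have hqa : 0 ≤ 1 - q ^ a := by
    have : q ^ a ≤ 1 := pow_le_one₀ (le_of_lt h0q) (le_of_lt hq1')
    linarith
  set S : Finset ℕ := insert m' (Finset.Ioo m m') with hS
  have hm'notin : m' ∉ Finset.Ioo m m' := by simp
  set sets : ℕ → Set ℝ := fun i => if i = m' then {(b : ℝ)} else Set.Iic (a : ℝ) with hsets
  have hFeq : Fset X m m' a b = ⋂ i ∈ S, X i ⁻¹' sets i := by
    rw [hS]
    rw [Finset.set_biInter_insert]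
    rw [Fset, Set.inter_comm]
    congr 1
    · simp [hsets]
    · apply Set.iInter₂_congr
      intro i hi
      have : i ≠ m' := by
        intro h; subst h; exact hm'notin hi
      simp [hsets, this]
  have hmeas : ∀ i ∈ S, MeasurableSet (sets i) := by
    intro i _
    rw [hsets]
    by_cases h : i = m' <;> simp [h]
  rw [hFeq, hindep.measure_inter_preimage_eq_mul S hmeas, Finset.prod_insert hm'notin]
  have h1 : ℙ (X m' ⁻¹' sets m') = ENNReal.ofReal (q ^ (b - 1) * p) := by
    rw [hsets]; simp only [if_pos rfl]
    exact measure_preimage_singleton X hlaw m' hb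
  have h2 : ∀ i ∈ Finset.Ioo m m', ℙ (X i ⁻¹' sets i) = ENNReal.ofReal (1 - q ^ a) := by
    intro i hi
    have : i ≠ m' := by intro h; subst h; exact hm'notin hi
    rw [hsets]; simp only [if_neg this]
    exact measure_preimage_Iic X hp hp1 hq hlaw hsupp hX i ha
  rw [h1, Finset.prod_congr rfl h2, Finset.prod_const, Nat.card_Ioo]
  rw [← ENNReal.ofReal_pow hqa, ← ENNReal.ofReal_mul (by positivity)]
  rw [mul_comm]

end Laws


section Tsum

lemma tsum_shift (m : ℕ) (g : ℕ → ℝ≥0∞) :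
    (∑' j : ℕ, if m < j then g (j - (m+1)) else 0) = ∑' t, g t := by
  have hinj : Function.Injective (fun t : ℕ => t + (m+1)) := add_left_injective (m+1)
  have hsupp : Function.support (fun j : ℕ => if m < j then g (j - (m+1)) else 0)
      ⊆ Set.range (fun t : ℕ => t + (m+1)) := by
    intro j hj
    have hmj : m < j := by
      by_contra h
      simp only [Function.mem_support, if_neg h, ne_eq, not_true_eq_false] at hj
    exact ⟨j - (m+1), show j - (m+1) + (m+1) = j by omega⟩
  have := hinj.tsum_eq (f := fun j : ℕ => if m < j then g (j - (m+1)) else 0) hsupp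
  rw [← this]
  apply tsum_congr
  intro t
  show (if m < t + (m+1) then g (t + (m+1) - (m+1)) else 0) = g t
  rw [if_pos (by omega)]
  congr 1
  omega

lemma one_sub_ofReal {x : ℝ} (hx : 0 ≤ x) :
    (1 : ℝ≥0∞) - ENNReal.ofReal x = ENNReal.ofReal (1 - x) := by
  rw [← ENNReal.ofReal_one, ← ENNReal.ofReal_sub _ hx]

lemma geom_tail {p q : ℝ} (hp : 0 < p) (hp1 : p < 1) (hq : q = 1 - p) :
    (∑' c : ℕ, if 1 ≤ c then ENNReal.ofReal (q ^ (c - 1) * p) else 0) = 1 := by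
  have h0q : 0 < q := hq0 hp1 hq
  have hq1' : q < 1 := hq1 hp hq
  have : (∑' c : ℕ, if 1 ≤ c then ENNReal.ofReal (q ^ (c - 1) * p) else 0)
      = ∑' t : ℕ, ENNReal.ofReal (q ^ t * p) := by
    rw [← tsum_shift 0 (fun t => ENNReal.ofReal (q ^ t * p))]
    apply tsum_congr
    intro c
    by_cases h : 1 ≤ c
    · rw [if_pos h, if_pos (by omega)]
    · rw [if_neg h, if_neg (by omega)]
  rw [this]
  have heach : ∀ t : ℕ, ENNReal.ofReal (q ^ t * p)
      = ENNReal.ofReal q ^ t * ENNReal.ofReal p := by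
    intro t
    rw [← ENNReal.ofReal_pow (le_of_lt h0q), ← ENNReal.ofReal_mul (by positivity)]
  simp_rw [heach]
  rw [ENNReal.tsum_mul_right, ENNReal.tsum_geometric, one_sub_ofReal (le_of_lt h0q)]
  have : 1 - q = p := by rw [hq]; ring
  rw [this, ENNReal.inv_mul_cancel (by simp [hp]) ENNReal.ofReal_ne_top]

end Tsum

section MainA

variable {p q : ℝ}

lemma measure_Aset (hX : ∀ i, Measurable (X i))
    (hindep : iIndepFun X ℙ)
    (hp : 0 < p) (hp1 : p < 1) (hq : q = 1 - p)
    (hlaw : ∀ i, ∀ c : ℕ, 1 ≤ c →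
      ℙ {ω : Ω | X i ω = (c : ℝ)} = ENNReal.ofReal (q ^ (c - 1) * p))
    (hsupp : ∀ i, ℙ {ω : Ω | ∃ c : ℕ, 1 ≤ c ∧ X i ω = (c : ℝ)} = 1)
    (k : ℕ → ℕ) (hk1 : 1 ≤ k 1) (hkmono : ∀ j, 1 ≤ j → k j < k (j+1)) :
    ∀ n, 1 ≤ n → ℙ (Aset X k n) = ENNReal.ofReal ((p / q) ^ n * q ^ k n) := by
  have h0q : 0 < q := hq0 hp1 hq
  have hq1' : q < 1 := hq1 hp hq
  have hkpos : ∀ j, 1 ≤ j → 1 ≤ k j := by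
    intro j hj
    induction j with
    | zero => omega
    | succ j ih =>
      rcases Nat.lt_or_ge j 1 with h | h
      · obtain rfl : j = 0 := by omega
        exact hk1
      · have := hkmono j h
        have := ih h
        omega
  intro n
  induction n with
  | zero => omega
  | succ n ih =>
    intro _
    rcases Nat.lt_or_ge n 1 with hn | hn
    · -- base case
      obtain rfl : n = 0 := by omega
      rw [Aset_one]
      rw [measure_preimage_singleton X hlaw 1 hk1]
      congr 1
      obtain ⟨t, ht⟩ : ∃ t, k 1 = t + 1 := ⟨k 1 - 1, by omega⟩
      rw [ht, pow_one, pow_succ, Nat.add_sub_cancel]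
      field_simp
    · -- inductive step
      have hkn1 : 1 ≤ k n := hkpos n hn
      have hkn2 : 1 ≤ k (n+1) := hkpos (n+1) (by omega)
      have hknlt : k n < k (n+1) := hkmono n hn
      have hFmeas : ∀ m m' a b : ℕ, MeasurableSet (Fset X m m' a b) := by
        intro m m' a b
        apply MeasurableSet.inter
        · exact MeasurableSet.biInter (Set.to_countable _) fun i _ =>
            (hX i) measurableSet_Iic
        · exact (hX m') (measurableSet_singleton _)
      have hDmeas : ∀ nn, 1 ≤ nn → ∀ m, MeasurableSet (Dset X k nn m) :=
        fun nn hnn m => Dset_measurable X hX k hkmono hnn m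
      have hsumA : ∀ nn, 1 ≤ nn → ℙ (Aset X k nn) = ∑' m, ℙ (Dset X k nn m) := by
        intro nn hnn
        rw [Aset_eq_iUnion X k hnn, measure_iUnion (Dset_disjoint X k nn) (hDmeas nn hnn)]
      -- decompose level n+1
      have hDval : ∀ m', ℙ (Dset X k (n+1) m') = ∑' m : ℕ,
          if m < m' then ℙ (Dset X k n m) *
            ENNReal.ofReal ((1 - q ^ k n) ^ (m' - m - 1) * (q ^ (k (n+1) - 1) * p))
          else 0 := by
        intro m'
        rw [Dset_succ X k n hn hknlt m']
        have hset : (⋃ m, ⋃ (_ : m < m'), Dset X k n m ∩ Fset X m m' (k n) (k (n+1)))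
            = ⋃ m, (if m < m' then Dset X k n m ∩ Fset X m m' (k n) (k (n+1)) else ∅) := by
          apply Set.iUnion_congr
          intro m
          by_cases h : m < m' <;> simp [h]
        rw [hset, measure_iUnion]
        · apply tsum_congr
          intro m
          by_cases h : m < m'
          · rw [if_pos h, if_pos h]
            rw [measure_Dset_inter_Fset X hX hindep k hkmono hn h (k n) (k (n+1))]
            rw [measure_Fset X hp hp1 hq hindep hlaw hsupp hX h hkn1 hkn2]
          · rw [if_neg h, if_neg h, measure_empty]
        · intro m1 m2 hne
          rw [Function.onFun]
          by_cases h1 : m1 < m' <;> by_cases h2 : m2 < m' <;>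
            simp only [if_pos, if_neg, h1, h2, if_true, if_false]
          · exact Set.disjoint_of_subset Set.inter_subset_left Set.inter_subset_left
              (Dset_disjoint X k n hne)
          · exact Set.disjoint_empty _
          · exact Set.empty_disjoint _
          · exact Set.disjoint_empty _
        · intro m
          by_cases h : m < m'
          · rw [if_pos h]
            exact (hDmeas n hn m).inter (hFmeas m m' (k n) (k (n+1)))
          · rw [if_neg h]; exact MeasurableSet.empty
      -- sum up
      have hCf : (∑' t : ℕ, ENNReal.ofReal ((1 - q ^ k n) ^ t * (q ^ (k (n+1) - 1) * p)))
          = ENNReal.ofReal (q ^ (k (n+1) - 1) * p) * (ENNReal.ofReal (q ^ k n))⁻¹ := by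
        have h1 : 0 ≤ 1 - q ^ k n := by
          have : q ^ k n ≤ 1 := pow_le_one₀ (le_of_lt h0q) (le_of_lt hq1')
          linarith
        have heach : ∀ t : ℕ, ENNReal.ofReal ((1 - q ^ k n) ^ t * (q ^ (k (n+1) - 1) * p))
            = ENNReal.ofReal (1 - q ^ k n) ^ t * ENNReal.ofReal (q ^ (k (n+1) - 1) * p) := by
          intro t
          rw [← ENNReal.ofReal_pow h1, ← ENNReal.ofReal_mul (by positivity)]
        simp_rw [heach]
        rw [ENNReal.tsum_mul_right, ENNReal.tsum_geometric, one_sub_ofReal h1]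
        have : (1 : ℝ) - (1 - q ^ k n) = q ^ k n := by ring
        rw [this, mul_comm]
      calc ℙ (Aset X k (n+1)) = ∑' m', ℙ (Dset X k (n+1) m') := hsumA (n+1) (by omega)
        _ = ∑' m' , ∑' m : ℕ, (if m < m' then ℙ (Dset X k n m) *
              ENNReal.ofReal ((1 - q ^ k n) ^ (m' - m - 1) * (q ^ (k (n+1) - 1) * p))
              else 0) := tsum_congr hDval
        _ = ∑' m : ℕ, ∑' m' : ℕ, (if m < m' then ℙ (Dset X k n m) *
              ENNReal.ofReal ((1 - q ^ k n) ^ (m' - m - 1) * (q ^ (k (n+1) - 1) * p))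
              else 0) := ENNReal.tsum_comm
        _ = ∑' m : ℕ, ∑' t : ℕ, ℙ (Dset X k n m) *
              ENNReal.ofReal ((1 - q ^ k n) ^ t * (q ^ (k (n+1) - 1) * p)) := by
            apply tsum_congr
            intro m
            rw [← tsum_shift m (fun t => ℙ (Dset X k n m) *
              ENNReal.ofReal ((1 - q ^ k n) ^ t * (q ^ (k (n+1) - 1) * p)))]
            apply tsum_congr
            intro m'
            by_cases h : m < m'
            · rw [if_pos h, if_pos h]
              have : m' - m - 1 = m' - (m + 1) := by omega
              rw [this]
            · rw [if_neg h, if_neg h]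
        _ = (∑' m : ℕ, ℙ (Dset X k n m)) *
              (ENNReal.ofReal (q ^ (k (n+1) - 1) * p) * (ENNReal.ofReal (q ^ k n))⁻¹) := by
            simp_rw [ENNReal.tsum_mul_left]
            rw [ENNReal.tsum_mul_right, hCf]
        _ = ENNReal.ofReal ((p / q) ^ n * q ^ k n) *
              (ENNReal.ofReal (q ^ (k (n+1) - 1) * p) * (ENNReal.ofReal (q ^ k n))⁻¹) := by
            rw [← hsumA n hn, ih hn]
        _ = ENNReal.ofReal ((p / q) ^ (n+1) * q ^ k (n+1)) := by
            rw [← mul_assoc, ← ENNReal.ofReal_mul (by positivity)]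
            rw [← div_eq_mul_inv, ← ENNReal.ofReal_div_of_pos (by positivity)]
            congr 1
            obtain ⟨t, ht⟩ : ∃ t, k (n+1) = t + 1 := ⟨k (n+1) - 1, by omega⟩
            rw [ht, Nat.add_sub_cancel]
            have hne : q ^ k n ≠ 0 := by positivity
            have hq0' : q ≠ 0 := ne_of_gt h0q
            field_simp
            have hqq : q * q⁻¹ = 1 := mul_inv_cancel₀ hq0'
            linear_combination (-(p * p ^ n * q ^ t * q⁻¹ ^ n)) * hqq

end MainA


section PartB

lemma tsum_pi_prod : ∀ (n : ℕ) (f : Fin n → ℕ → ℝ≥0∞),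
    (∑' c : Fin n → ℕ, ∏ i, f i (c i)) = ∏ i, ∑' t, f i t := by
  intro n
  induction n with
  | zero =>
    intro f
    rw [tsum_eq_single (fun i => 0) (fun b hb => absurd (Subsingleton.elim b _) hb)]
    simp
  | succ n ih =>
    intro f
    let e := (Fin.consEquiv (fun _ : Fin (n+1) => ℕ))
    rw [← Equiv.tsum_eq e (fun c : Fin (n+1) → ℕ => ∏ i, f i (c i))]
    have hsplit : ∀ x : ℕ × (Fin n → ℕ),
        (∏ i, f i ((e x) i)) = f 0 x.1 * ∏ i : Fin n, f i.succ (x.2 i) := by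
      rintro ⟨a, c⟩
      rw [Fin.prod_univ_succ]
      simp only [e, Fin.consEquiv, Equiv.coe_fn_mk, Fin.cons_zero, Fin.cons_succ]
    calc (∑' x : ℕ × (Fin n → ℕ), ∏ i, f i ((e x) i))
        = ∑' x : ℕ × (Fin n → ℕ), f 0 x.1 * ∏ i : Fin n, f i.succ (x.2 i) :=
          tsum_congr hsplit
      _ = ∑' a : ℕ, ∑' c : Fin n → ℕ, f 0 a * ∏ i : Fin n, f i.succ (c i) :=
          ENNReal.tsum_prod'
      _ = (∑' a : ℕ, f 0 a) * ∑' c : Fin n → ℕ, ∏ i : Fin n, f i.succ (c i) := by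
          simp_rw [ENNReal.tsum_mul_left]
          rw [ENNReal.tsum_mul_right]
      _ = (∑' a : ℕ, f 0 a) * ∏ i : Fin n, ∑' t, f i.succ t := by
          rw [ih (fun i => f i.succ)]
      _ = ∏ i, ∑' t, f i t := by rw [Fin.prod_univ_succ]

variable {n : ℕ}

/-- extension of an increment vector -/
def cext (n : ℕ) (c : Fin n → ℕ) : ℕ → ℕ := fun i => if h : i < n then c ⟨i, h⟩ else 1

def ksum (n : ℕ) (c : Fin n → ℕ) : ℕ → ℕ := fun j => ∑ i ∈ Finset.range j, cext n c i

lemma cext_pos {c : Fin n → ℕ} (hc : ∀ i, 1 ≤ c i) (i : ℕ) : 1 ≤ cext n c i := by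
  rw [cext]
  by_cases h : i < n
  · rw [dif_pos h]; exact hc _
  · rw [dif_neg h]

lemma ksum_succ (c : Fin n → ℕ) (j : ℕ) :
    ksum n c (j+1) = ksum n c j + cext n c j := Finset.sum_range_succ _ _

lemma ksum_mono {c : Fin n → ℕ} (hc : ∀ i, 1 ≤ c i) :
    ∀ j, 1 ≤ j → ksum n c j < ksum n c (j+1) := by
  intro j _
  rw [ksum_succ]
  have := cext_pos hc j
  omega

lemma ksum_pos {c : Fin n → ℕ} (hc : ∀ i, 1 ≤ c i) : 1 ≤ ksum n c 1 := by
  rw [show (1 : ℕ) = 0 + 1 from rfl, ksum_succ]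
  have := cext_pos hc 0
  omega

lemma ksum_inj {c c' : Fin n → ℕ}
    (hagree : ∀ j, 1 ≤ j → j ≤ n → ksum n c j = ksum n c' j) : c = c' := by
  funext i
  have h0 : ∀ (d : Fin n → ℕ), ksum n d 0 = 0 := by intro d; rfl
  have hagree' : ∀ j, j ≤ n → ksum n c j = ksum n c' j := by
    intro j hj
    rcases Nat.eq_zero_or_pos j with h | h
    · rw [h, h0, h0]
    · exact hagree j h hj
  have e1 := hagree' i.1 (le_of_lt i.2)
  have e2 := hagree' (i.1 + 1) i.2
  rw [ksum_succ, ksum_succ] at e2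
  have : cext n c i.1 = cext n c' i.1 := by omega
  rw [cext, cext, dif_pos i.2, dif_pos i.2] at this
  simpa using this

lemma recValue_on_Aset {k : ℕ → ℕ} {ω : Ω} (hA : ω ∈ Aset X k n)
    {j : ℕ} (hj : 1 ≤ j) (hjn : j ≤ n) : recValue X j ω = (k j : ℝ) := by
  obtain ⟨m, hm, hx⟩ := mem_Aset_value X hj hjn hA
  rw [recValue, hm]
  simpa using hx

lemma Dfun_on_Aset {c : Fin n → ℕ} {ω : Ω}
    (hA : ω ∈ Aset X (ksum n c) n) (j : Fin n) :
    recValue X (j.1 + 1) ω - (if j.1 = 0 then 0 else recValue X j.1 ω) = (c j : ℝ) := by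
  have hv1 : recValue X (j.1 + 1) ω = (ksum n c (j.1 + 1) : ℝ) :=
    recValue_on_Aset X hA (by omega) j.2
  by_cases h : j.1 = 0
  · rw [if_pos h, hv1, sub_zero]
    have h1 : j.1 + 1 = 1 := by omega
    have h2 : ksum n c 1 = c j := by
      rw [show (1:ℕ) = 0 + 1 from rfl, ksum_succ]
      have hk0 : ksum n c 0 = 0 := rfl
      have hj0 : (⟨0, by omega⟩ : Fin n) = j := Fin.ext h.symm
      rw [hk0, cext, dif_pos (by omega : 0 < n), hj0]
      omega
    rw [h1, h2]
  · rw [if_neg h, hv1]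
    have hv2 : recValue X j.1 ω = (ksum n c j.1 : ℝ) :=
      recValue_on_Aset X hA (by omega) (le_of_lt j.2)
    rw [hv2, ksum_succ]
    have : cext n c j.1 = c j := by
      rw [cext, dif_pos j.2]
    push_cast [this]
    ring

lemma Aset_ksum_disjoint {c c' : Fin n → ℕ} (hc : ∀ i, 1 ≤ c i) (hc' : ∀ i, 1 ≤ c' i)
    (hne : c ≠ c') (hn : 1 ≤ n) :
    Disjoint (Aset X (ksum n c) n) (Aset X (ksum n c') n) := by
  rw [Set.disjoint_left]
  intro ω h1 h2
  apply hne
  apply ksum_inj (n := n)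
  intro j hj hjn
  have e1 := recValue_on_Aset X h1 hj hjn
  have e2 := recValue_on_Aset X h2 hj hjn
  rw [e1] at e2
  exact_mod_cast e2

lemma Aset_measurable (hX : ∀ i, Measurable (X i)) {k : ℕ → ℕ}
    (hkmono : ∀ j, 1 ≤ j → k j < k (j+1)) (hn : 1 ≤ n) :
    MeasurableSet (Aset X k n) := by
  rw [Aset_eq_iUnion X k hn]
  exact MeasurableSet.iUnion fun m => Dset_measurable X hX k hkmono hn m

end PartB


section Master

variable {p q : ℝ} {n : ℕ}

lemma prod_increment (hp : 0 < p) (hp1 : p < 1) (hq : q = 1 - p)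
    {c : Fin n → ℕ} (hc : ∀ i, 1 ≤ c i) : ∀ j : ℕ,
    (p / q) ^ j * q ^ (ksum n c j) = ∏ i ∈ Finset.range j, (q ^ (cext n c i - 1) * p) := by
  have h0q : 0 < q := hq0 hp1 hq
  intro j
  induction j with
  | zero => simp [ksum]
  | succ j ih =>
    rw [pow_succ, ksum_succ, pow_add, Finset.prod_range_succ, ← ih]
    obtain ⟨t, ht⟩ : ∃ t, cext n c j = t + 1 := ⟨cext n c j - 1, by
      have := cext_pos hc j
      omega⟩
    rw [ht, Nat.add_sub_cancel]
    have hqne : q ≠ 0 := ne_of_gt h0q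
    field_simp
    ring

lemma measure_Aset_ksum (hX : ∀ i, Measurable (X i))
    (hindep : iIndepFun X ℙ)
    (hp : 0 < p) (hp1 : p < 1) (hq : q = 1 - p)
    (hlaw : ∀ i, ∀ c : ℕ, 1 ≤ c →
      ℙ {ω : Ω | X i ω = (c : ℝ)} = ENNReal.ofReal (q ^ (c - 1) * p))
    (hsupp : ∀ i, ℙ {ω : Ω | ∃ c : ℕ, 1 ≤ c ∧ X i ω = (c : ℝ)} = 1)
    (hn : 1 ≤ n) {c : Fin n → ℕ} (hc : ∀ i, 1 ≤ c i) :
    ℙ (Aset X (ksum n c) n) = ENNReal.ofReal (∏ i : Fin n, (q ^ (c i - 1) * p)) := by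
  rw [measure_Aset X hX hindep hp hp1 hq hlaw hsupp (ksum n c) (ksum_pos hc)
    (fun j hj => ksum_mono hc j hj) n hn]
  congr 1
  rw [prod_increment hp hp1 hq hc n]
  rw [← Fin.prod_univ_eq_prod_range (fun i => q ^ (cext n c i - 1) * p) n]
  exact Finset.prod_congr rfl fun i _ => by rw [cext, dif_pos i.2]

open scoped Classical in
lemma measure_master (hX : ∀ i, Measurable (X i))
    (hindep : iIndepFun X ℙ)
    (hp : 0 < p) (hp1 : p < 1) (hq : q = 1 - p)
    (hlaw : ∀ i, ∀ c : ℕ, 1 ≤ c →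
      ℙ {ω : Ω | X i ω = (c : ℝ)} = ENNReal.ofReal (q ^ (c - 1) * p))
    (hsupp : ∀ i, ℙ {ω : Ω | ∃ c : ℕ, 1 ≤ c ∧ X i ω = (c : ℝ)} = 1)
    (hn : 1 ≤ n) (S : Finset (Fin n)) (B : Fin n → Set ℝ) :
    ℙ (⋂ j ∈ S, (fun ω => recValue X (j.1 + 1) ω -
          if j.1 = 0 then 0 else recValue X j.1 ω) ⁻¹' B j)
      = ∏ j ∈ S, (∑' t : ℕ,
          if 1 ≤ t ∧ (t : ℝ) ∈ B j then ENNReal.ofReal (q ^ (t - 1) * p) else 0) := by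
  classical
  have h0q : 0 < q := hq0 hp1 hq
  -- measure of a constrained union
  have hU : ∀ (S' : Finset (Fin n)) (B' : Fin n → Set ℝ),
      ℙ (⋃ γ : {c : Fin n → ℕ // (∀ i, 1 ≤ c i) ∧ ∀ j ∈ S', (c j : ℝ) ∈ B' j},
          Aset X (ksum n γ.1) n)
        = ∏ j ∈ S', (∑' t : ℕ,
            if 1 ≤ t ∧ (t : ℝ) ∈ B' j then ENNReal.ofReal (q ^ (t - 1) * p) else 0) := by
    intro S' B'
    rw [measure_iUnion]
    rotate_left
    · intro γ1 γ2 hne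
      rw [Function.onFun]
      exact Aset_ksum_disjoint X γ1.2.1 γ2.2.1 (fun h => hne (Subtype.ext h)) hn
    · intro γ
      exact Aset_measurable X hX (fun j hj => ksum_mono γ.2.1 j hj) hn
    set f : Fin n → ℕ → ℝ≥0∞ := fun i t =>
      if 1 ≤ t ∧ (i ∈ S' → (t : ℝ) ∈ B' i) then ENNReal.ofReal (q ^ (t - 1) * p) else 0
      with hf
    have hFval : ∀ γ : {c : Fin n → ℕ // (∀ i, 1 ≤ c i) ∧ ∀ j ∈ S', (c j : ℝ) ∈ B' j},
        ℙ (Aset X (ksum n γ.1) n) = ∏ i : Fin n, f i (γ.1 i) := by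
      intro γ
      rw [measure_Aset_ksum X hX hindep hp hp1 hq hlaw hsupp hn γ.2.1]
      rw [ENNReal.ofReal_prod_of_nonneg (fun i _ => by positivity)]
      exact Finset.prod_congr rfl fun i _ =>
        (if_pos ⟨γ.2.1 i, fun hi => γ.2.2 i hi⟩).symm
    rw [tsum_congr hFval]
    have hsubt : (∑' γ : {c : Fin n → ℕ // (∀ i, 1 ≤ c i) ∧ ∀ j ∈ S', (c j : ℝ) ∈ B' j},
        ∏ i : Fin n, f i (γ.1 i)) = ∑' c : Fin n → ℕ, ∏ i : Fin n, f i (c i) := by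
      apply Subtype.val_injective.tsum_eq (f := fun c : Fin n → ℕ => ∏ i : Fin n, f i (c i))
      intro c hcne
      rw [Function.mem_support] at hcne
      have hfac : ∀ i : Fin n, f i (c i) ≠ 0 := by
        intro i
        intro h0
        exact hcne (Finset.prod_eq_zero (Finset.mem_univ i) h0)
      have hprop : (∀ i, 1 ≤ c i) ∧ ∀ j ∈ S', (c j : ℝ) ∈ B' j := by
        constructor
        · intro i
          have := hfac i
          by_contra hcon
          exact this (if_neg (fun hcond => hcon hcond.1))
        · intro j hj
          have := hfac j
          by_contra hcon
          apply this
          apply if_neg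
          rintro ⟨-, h2⟩
          exact hcon (h2 hj)
      exact ⟨⟨c, hprop⟩, rfl⟩
    rw [hsubt, tsum_pi_prod n f]
    calc ∏ i : Fin n, ∑' t, f i t
        = ∏ j ∈ S', ∑' t, f j t := by
          refine (Finset.prod_subset (Finset.subset_univ S') ?_).symm
          intro x _ hx
          have : ∀ t : ℕ, f x t = if 1 ≤ t then ENNReal.ofReal (q ^ (t - 1) * p) else 0 := by
            intro t
            simp only [hf]
            apply if_congr _ rfl rfl
            simp [hx]
          rw [tsum_congr this, geom_tail hp hp1 hq]
      _ = ∏ j ∈ S', (∑' t : ℕ,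
            if 1 ≤ t ∧ (t : ℝ) ∈ B' j then ENNReal.ofReal (q ^ (t - 1) * p) else 0) := by
          refine Finset.prod_congr rfl fun j hj => tsum_congr fun t => ?_
          simp only [hf]
          apply if_congr _ rfl rfl
          simp [hj]
  -- the full-space union
  have hTmeas : MeasurableSet (⋃ γ : {c : Fin n → ℕ // (∀ i, 1 ≤ c i) ∧
      ∀ j ∈ (∅ : Finset (Fin n)), (c j : ℝ) ∈ B j}, Aset X (ksum n γ.1) n) :=
    MeasurableSet.iUnion fun γ =>
      Aset_measurable X hX (fun j hj => ksum_mono γ.2.1 j hj) hn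
  have hT1 : ℙ (⋃ γ : {c : Fin n → ℕ // (∀ i, 1 ≤ c i) ∧
      ∀ j ∈ (∅ : Finset (Fin n)), (c j : ℝ) ∈ B j}, Aset X (ksum n γ.1) n) = 1 := by
    rw [hU ∅ B, Finset.prod_empty]
  have hTnull : ℙ (⋃ γ : {c : Fin n → ℕ // (∀ i, 1 ≤ c i) ∧
      ∀ j ∈ (∅ : Finset (Fin n)), (c j : ℝ) ∈ B j}, Aset X (ksum n γ.1) n)ᶜ = 0 := by
    rw [measure_compl hTmeas (measure_ne_top _ _), hT1, measure_univ, tsub_self]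
  -- the target set vs constrained union
  have hsub1 : (⋃ γ : {c : Fin n → ℕ // (∀ i, 1 ≤ c i) ∧ ∀ j ∈ S, (c j : ℝ) ∈ B j},
      Aset X (ksum n γ.1) n) ⊆
      ⋂ j ∈ S, (fun ω => recValue X (j.1 + 1) ω -
        if j.1 = 0 then 0 else recValue X j.1 ω) ⁻¹' B j := by
    rintro ω hω
    obtain ⟨γ, hγ⟩ := Set.mem_iUnion.mp hω
    apply Set.mem_iInter₂.mpr
    intro j hj
    rw [Set.mem_preimage]
    rw [Dfun_on_Aset X hγ j]
    exact γ.2.2 j hj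
  have hsub2 : (⋂ j ∈ S, (fun ω => recValue X (j.1 + 1) ω -
        if j.1 = 0 then 0 else recValue X j.1 ω) ⁻¹' B j) ⊆
      (⋃ γ : {c : Fin n → ℕ // (∀ i, 1 ≤ c i) ∧ ∀ j ∈ S, (c j : ℝ) ∈ B j},
        Aset X (ksum n γ.1) n) ∪
      (⋃ γ : {c : Fin n → ℕ // (∀ i, 1 ≤ c i) ∧
        ∀ j ∈ (∅ : Finset (Fin n)), (c j : ℝ) ∈ B j}, Aset X (ksum n γ.1) n)ᶜ := by
    intro ω hω
    by_cases hT : ω ∈ ⋃ γ : {c : Fin n → ℕ // (∀ i, 1 ≤ c i) ∧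
        ∀ j ∈ (∅ : Finset (Fin n)), (c j : ℝ) ∈ B j}, Aset X (ksum n γ.1) n
    · left
      obtain ⟨γ, hγ⟩ := Set.mem_iUnion.mp hT
      apply Set.mem_iUnion.mpr
      refine ⟨⟨γ.1, γ.2.1, ?_⟩, hγ⟩
      intro j hj
      have := Set.mem_iInter₂.mp hω j hj
      rw [Set.mem_preimage] at this
      rwa [Dfun_on_Aset X hγ j] at this
    · right
      exact hT
  rw [← hU S B]
  apply le_antisymm
  · calc ℙ (⋂ j ∈ S, (fun ω => recValue X (j.1 + 1) ω -
          if j.1 = 0 then 0 else recValue X j.1 ω) ⁻¹' B j)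
        ≤ ℙ ((⋃ γ : {c : Fin n → ℕ // (∀ i, 1 ≤ c i) ∧ ∀ j ∈ S, (c j : ℝ) ∈ B j},
            Aset X (ksum n γ.1) n) ∪ _) := measure_mono hsub2
      _ ≤ ℙ (⋃ γ : {c : Fin n → ℕ // (∀ i, 1 ≤ c i) ∧ ∀ j ∈ S, (c j : ℝ) ∈ B j},
            Aset X (ksum n γ.1) n) + _ := measure_union_le _ _
      _ = ℙ (⋃ γ : {c : Fin n → ℕ // (∀ i, 1 ≤ c i) ∧ ∀ j ∈ S, (c j : ℝ) ∈ B j},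
            Aset X (ksum n γ.1) n) := by rw [hTnull, add_zero]
  · exact measure_mono hsub1

end Master

end S18

/-- for `X₁, X₂, …` iid geometric with success probability `p = 1 - q`
(values in `{1,2,…}`, `P(X=k) = q^{k-1}p`), and `1 ≤ k₁ < ⋯ < kₙ`,
`P(X⁽¹⁾=k₁, …, X⁽ⁿ⁾=kₙ) = (p/q)^n q^{kₙ}`; consequently the record increments
`X⁽ʲ⁾ - X⁽ʲ⁻¹⁾` (with `X⁽⁰⁾ = 0`) are iid geometric with parameter `p`. -/
theorem stmt18 {Ω : Type*} [MeasureSpace Ω] [IsProbabilityMeasure (ℙ : Measure Ω)]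
    (X : ℕ → Ω → ℝ) (hXmeas : ∀ i, Measurable (X i))
    (hindep : iIndepFun X ℙ)
    (p q : ℝ) (hp : 0 < p) (hp1 : p < 1) (hq : q = 1 - p)
    (hlaw : ∀ i, ∀ k : ℕ, 1 ≤ k →
      ℙ {ω | X i ω = (k : ℝ)} = ENNReal.ofReal (q ^ (k - 1) * p))
    (hsupp : ∀ i, ℙ {ω | ∃ k : ℕ, 1 ≤ k ∧ X i ω = (k : ℝ)} = 1)
    (n : ℕ) (hn : 1 ≤ n) (kseq : ℕ → ℕ) (hk1 : 1 ≤ kseq 1)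
    (hkmono : ∀ j, 1 ≤ j → j < n → kseq j < kseq (j + 1)) :
    ℙ (⋂ j ∈ Finset.Icc 1 n,
          {ω | ∃ m : ℕ, recTime X j ω = (m : ℕ∞) ∧ X m ω = (kseq j : ℝ)}) =
        ENNReal.ofReal ((p / q) ^ n * q ^ kseq n) ∧
      iIndepFun
        (fun (j : Fin n) ω => recValue X (j.1 + 1) ω - if j.1 = 0 then 0 else recValue X j.1 ω)
        ℙ ∧
      ∀ j : Fin n, ∀ c : ℕ, 1 ≤ c →
        ℙ {ω | recValue X (j.1 + 1) ω - (if j.1 = 0 then 0 else recValue X j.1 ω)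
              = (c : ℝ)} =
          ENNReal.ofReal (q ^ (c - 1) * p) := by
  classical
  refine ⟨?_, ?_, ?_⟩
  · -- joint pmf of the record values
    set k' : ℕ → ℕ := fun j => if j ≤ n then kseq j else kseq n + (j - n) with hk'
    have hset : (⋂ j ∈ Finset.Icc 1 n,
        {ω | ∃ m : ℕ, recTime X j ω = (m : ℕ∞) ∧ X m ω = (kseq j : ℝ)})
          = S18.Aset X k' n := by
      rw [S18.Aset]
      apply Set.iInter_congr
      intro j
      apply Set.iInter_congr
      intro hj
      have hjn : j ≤ n := (Finset.mem_Icc.mp hj).2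
      rw [hk']
      simp only [if_pos hjn]
    have hk1' : 1 ≤ k' 1 := by rw [hk']; simp only [if_pos hn]; exact hk1
    have hmono' : ∀ j, 1 ≤ j → k' j < k' (j + 1) := by
      intro j hj
      rw [hk']
      simp only
      by_cases h1 : j + 1 ≤ n
      · rw [if_pos (by omega), if_pos h1]
        exact hkmono j hj (by omega)
      · by_cases h2 : j ≤ n
        · rw [if_pos h2, if_neg h1]
          obtain rfl : j = n := by omega
          omega
        · rw [if_neg h2, if_neg h1]
          omega
    rw [hset, S18.measure_Aset X hXmeas hindep hp hp1 hq hlaw hsupp k' hk1' hmono' n hn]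
    have : k' n = kseq n := by rw [hk']; simp only [if_pos (le_refl n)]
    rw [this]
  · -- independence of the increments
    rw [ProbabilityTheory.iIndepFun_iff_measure_inter_preimage_eq_mul]
    intro S sets _
    have hM := S18.measure_master X hXmeas hindep hp hp1 hq hlaw hsupp hn S sets
    have hsingle : ∀ j : Fin n,
        ℙ ((fun ω => recValue X (j.1 + 1) ω -
            if j.1 = 0 then 0 else recValue X j.1 ω) ⁻¹' sets j)
          = ∑' t : ℕ, if 1 ≤ t ∧ (t : ℝ) ∈ sets j then
              ENNReal.ofReal (q ^ (t - 1) * p) else 0 := by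
      intro j
      have h := S18.measure_master X hXmeas hindep hp hp1 hq hlaw hsupp hn {j} sets
      rwa [Finset.set_biInter_singleton, Finset.prod_singleton] at h
    exact hM.trans (Finset.prod_congr rfl fun j _ => (hsingle j).symm)
  · -- marginal law of the increments
    intro j c hc
    have h := S18.measure_master X hXmeas hindep hp hp1 hq hlaw hsupp hn {j}
      (fun _ => {(c : ℝ)})
    rw [Finset.set_biInter_singleton, Finset.prod_singleton] at h
    have hval : (∑' t : ℕ, if 1 ≤ t ∧ (t : ℝ) ∈ ({(c : ℝ)} : Set ℝ) then
        ENNReal.ofReal (q ^ (t - 1) * p) else 0) = ENNReal.ofReal (q ^ (c - 1) * p) := by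
      rw [tsum_eq_single c]
      · rw [if_pos ⟨hc, rfl⟩]
      · intro b hb
        apply if_neg
        rintro ⟨-, hmem⟩
        rw [Set.mem_singleton_iff] at hmem
        exact hb (by exact_mod_cast hmem)
    exact h.trans hval
end

section
/- Let X_1, X_2, ... be iid discrete real random variables with strictly positive mass function f on a countable support, cdf F, and discrete hazard r(x)=f(x)/(1-F(x)). Then for y_1 < y_2 < ... < y_n in the support, P(X^{(1)}=y_1, ..., X^{(n)}=y_n) = (∏_{i=1}^{n-1} r(y_i)) f(y_n). -/
open MeasureTheory ProbabilityTheory Set Real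
open scoped ENNReal

namespace Stmt19Aux

lemma enat_sInf_coe_image_eq_iff {S : Set ℕ} {k : ℕ} :
    sInf ((fun j : ℕ => (j : ℕ∞)) '' S) = (k : ℕ∞) ↔ k ∈ S ∧ ∀ j ∈ S, k ≤ j := by
  constructor
  · intro h
    rcases S.eq_empty_or_nonempty with rfl | hS
    · simp at h
    · have h1 : sInf ((fun j : ℕ => (j : ℕ∞)) '' S) = ((sInf S : ℕ) : ℕ∞) := by
        apply le_antisymm
        · exact sInf_le ⟨sInf S, Nat.sInf_mem hS, rfl⟩
        · refine le_sInf ?_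
          rintro a ⟨j, hj, rfl⟩
          simpa using Nat.sInf_le hj
      rw [h1] at h
      have h2 : sInf S = k := by exact_mod_cast h
      exact ⟨h2 ▸ Nat.sInf_mem hS, fun j hj => h2 ▸ Nat.sInf_le hj⟩
  · rintro ⟨hk, hmin⟩
    apply le_antisymm
    · exact sInf_le ⟨k, hk, rfl⟩
    · refine le_sInf ?_
      rintro a ⟨j, hj, rfl⟩
      simpa using hmin j hj

lemma recTime_succ_succ {Ω : Type*} (X : ℕ → Ω → ℝ) (ω : Ω) (i m : ℕ)
    (h : recTime X (i+1) ω = (m : ℕ∞)) :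
    recTime X (i+2) ω = sInf ((fun j : ℕ => (j : ℕ∞)) '' {k | m < k ∧ X m ω < X k ω}) := by
  show sInf _ = _
  congr 1
  ext j
  simp only [Set.mem_setOf_eq, Set.mem_image]
  constructor
  · rintro ⟨m', k, hm', rfl, hlt, hX⟩
    rw [h] at hm'
    have : m = m' := by exact_mod_cast hm'
    subst this
    exact ⟨k, ⟨hlt, hX⟩, rfl⟩
  · rintro ⟨k, ⟨hlt, hX⟩, rfl⟩
    exact ⟨m, k, h, rfl, hlt, hX⟩

lemma rec_facts {Ω : Type*} (X : ℕ → Ω → ℝ) (ω : Ω) (i m m' : ℕ)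
    (h : recTime X (i+1) ω = (m : ℕ∞)) (h' : recTime X (i+2) ω = (m' : ℕ∞)) :
    (m < m' ∧ X m ω < X m' ω) ∧ ∀ j, m < j → j < m' → X j ω ≤ X m ω := by
  have h2 := recTime_succ_succ X ω i m h
  rw [h'] at h2
  rw [eq_comm, enat_sInf_coe_image_eq_iff] at h2
  obtain ⟨hmem, hmin⟩ := h2
  refine ⟨hmem, fun j hj1 hj2 => ?_⟩
  by_contra hlt
  push_neg at hlt
  exact absurd (hmin j ⟨hj1, hlt⟩) (by omega)

lemma rec_next {Ω : Type*} (X : ℕ → Ω → ℝ) (ω : Ω) (i m m' : ℕ)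
    (h : recTime X (i+1) ω = (m : ℕ∞)) (h1 : m < m') (h2 : X m ω < X m' ω)
    (hmin : ∀ j, m < j → j < m' → X j ω ≤ X m ω) :
    recTime X (i+2) ω = (m' : ℕ∞) := by
  rw [recTime_succ_succ X ω i m h, enat_sInf_coe_image_eq_iff]
  refine ⟨⟨h1, h2⟩, ?_⟩
  rintro j ⟨hj1, hj2⟩
  by_contra hc
  push_neg at hc
  exact absurd hj2 (not_lt.2 (hmin j hj1 hc))

/-- record times from gap sequence -/
def T (G : ℕ → ℕ) : ℕ → ℕ
  | 0 => 1
  | k+1 => T G k + G k + 1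

lemma T_zero (G : ℕ → ℕ) : T G 0 = 1 := rfl

lemma one_le_T (G : ℕ → ℕ) (k : ℕ) : 1 ≤ T G k := by
  induction k with
  | zero => simp [T]
  | succ k ih => simp only [T]; omega

lemma T_lt_succ (G : ℕ → ℕ) (k : ℕ) : T G k < T G (k+1) := by
  simp only [T]; omega

lemma T_strictMono (G : ℕ → ℕ) : StrictMono (T G) :=
  strictMono_nat_of_lt_succ (T_lt_succ G)

def Yext {n : ℕ} (y : Fin (n+1) → ℝ) (k : ℕ) : ℝ :=
  if h : k < n + 1 then y ⟨k, h⟩ else y (Fin.last n)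

lemma Yext_lt {n : ℕ} (y : Fin (n+1) → ℝ) (hy : StrictMono y) {k : ℕ} (hk : k < n) :
    Yext y k < Yext y (k+1) := by
  rw [Yext, Yext, dif_pos (by omega), dif_pos (by omega)]
  exact hy (by simp [Fin.lt_def])

def idx (n : ℕ) (G : ℕ → ℕ) (j : ℕ) : ℕ := Nat.findGreatest (fun i => T G i ≤ j) n

lemma idx_eq (n : ℕ) (G : ℕ → ℕ) {i j : ℕ} (hi : i ≤ n) (h1 : T G i ≤ j)
    (h2 : j < T G (i+1)) : idx n G j = i := by
  rw [idx, Nat.findGreatest_eq_iff]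
  refine ⟨hi, fun _ => h1, fun k hk hkn hP => ?_⟩
  have : T G (i+1) ≤ T G k := (T_strictMono G).monotone hk
  omega

def B (n : ℕ) (y : Fin (n+1) → ℝ) (G : ℕ → ℕ) (j : ℕ) : Set ℝ :=
  if T G (idx n G j) = j then {Yext y (idx n G j)} else Set.Iic (Yext y (idx n G j))

lemma B_measurable (n : ℕ) (y : Fin (n+1) → ℝ) (G : ℕ → ℕ) (j : ℕ) :
    MeasurableSet (B n y G j) := by
  rw [B]; split
  · exact measurableSet_singleton _
  · exact measurableSet_Iic

lemma B_at_T (n : ℕ) (y : Fin (n+1) → ℝ) (G : ℕ → ℕ) {k : ℕ} (hk : k ≤ n) :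
    B n y G (T G k) = {Yext y k} := by
  have hidx : idx n G (T G k) = k := idx_eq n G hk le_rfl (T_lt_succ G k)
  rw [B, hidx, if_pos rfl]

lemma B_at_Ioo (n : ℕ) (y : Fin (n+1) → ℝ) (G : ℕ → ℕ) {k j : ℕ} (hk : k ≤ n)
    (h1 : T G k < j) (h2 : j < T G (k+1)) : B n y G j = Set.Iic (Yext y k) := by
  have hidx : idx n G j = k := idx_eq n G hk (le_of_lt h1) h2
  rw [B, hidx, if_neg (by omega)]


section Core
variable {Ω : Type*} (X : ℕ → Ω → ℝ) {n : ℕ} (y : Fin (n+1) → ℝ)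

lemma mem_cyl_iff (hymono : StrictMono y) (G : ℕ → ℕ) (ω : Ω) :
    (∀ j ∈ Finset.Icc 1 (T G n), X j ω ∈ B n y G j) ↔
    ∀ k, k ≤ n → recTime X (k+1) ω = (T G k : ℕ∞) ∧ X (T G k) ω = Yext y k := by
  constructor
  · intro hc
    -- values at record times
    have hval : ∀ k, k ≤ n → X (T G k) ω = Yext y k := by
      intro k hk
      have hmem : T G k ∈ Finset.Icc 1 (T G n) :=
        Finset.mem_Icc.2 ⟨one_le_T G k, (T_strictMono G).monotone hk⟩
      have := hc _ hmem
      rwa [B_at_T n y G hk, Set.mem_singleton_iff] at this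
    have hioo : ∀ k, k < n → ∀ j, T G k < j → j < T G (k+1) → X j ω ≤ Yext y k := by
      intro k hk j h1 h2
      have hmem : j ∈ Finset.Icc 1 (T G n) := by
        refine Finset.mem_Icc.2 ⟨by have := one_le_T G k; omega, ?_⟩
        exact le_trans (le_of_lt h2) ((T_strictMono G).monotone (by omega))
      have := hc _ hmem
      rwa [B_at_Ioo n y G (le_of_lt hk) h1 h2, Set.mem_Iic] at this
    intro k hk
    induction k with
    | zero => exact ⟨rfl, hval 0 (by omega)⟩
    | succ k ih =>
      obtain ⟨ihr, _⟩ := ih (by omega)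
      refine ⟨?_, hval _ hk⟩
      refine rec_next X ω k (T G k) (T G (k+1)) ihr (T_lt_succ G k) ?_ ?_
      · rw [hval k (by omega), hval (k+1) hk]
        exact Yext_lt y hymono (by omega)
      · intro j hj1 hj2
        rw [hval k (by omega)]
        exact hioo k (by omega) j hj1 hj2
  · intro hr j hj
    rw [Finset.mem_Icc] at hj
    have hidx : Nat.findGreatest (fun i => T G i ≤ j) n = idx n G j := rfl
    have hile : idx n G j ≤ n := hidx ▸ Nat.findGreatest_le n
    have hTle : T G (idx n G j) ≤ j := Nat.findGreatest_spec (P := fun i => T G i ≤ j)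
        (Nat.zero_le n) (by simpa [T_zero] using hj.1)
    have hlt : j < T G (idx n G j + 1) := by
      rcases Nat.lt_or_ge (idx n G j) n with hin | hin
      · by_contra hcon
        push_neg at hcon
        exact Nat.findGreatest_is_greatest (P := fun i => T G i ≤ j) (n := n)
          (by omega) (by omega) hcon
      · have hi : idx n G j = n := le_antisymm hile hin
        rw [hi]
        have := T_lt_succ G n
        omega
    rcases eq_or_ne (T G (idx n G j)) j with he | hne
    · rw [B, if_pos he, Set.mem_singleton_iff]
      have := (hr _ hile).2
      rwa [he] at this
    · rw [B, if_neg hne, Set.mem_Iic]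
      have hin : idx n G j < n := by
        rcases Nat.lt_or_ge (idx n G j) n with h | h
        · exact h
        · exfalso
          have hi : idx n G j = n := le_antisymm hile h
          rw [hi] at hTle hne
          exact hne (le_antisymm hTle hj.2)
      have hf := rec_facts X ω (idx n G j) (T G (idx n G j)) (T G (idx n G j + 1))
        (hr _ hile).1 (hr _ (by omega)).1
      have := hf.2 j (by omega) hlt
      rwa [(hr _ hile).2] at this

def Gext {n : ℕ} (g : Fin n → ℕ) (k : ℕ) : ℕ := if h : k < n then g ⟨k, h⟩ else 0

lemma event_eq (hymono : StrictMono y) :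
    (⋂ i : Fin (n + 1), {ω | ∃ m : ℕ, recTime X (i.1 + 1) ω = (m : ℕ∞) ∧ X m ω = y i}) =
    ⋃ g : Fin n → ℕ, ⋂ j ∈ Finset.Icc 1 (T (Gext g) n), X j ⁻¹' B n y (Gext g) j := by
  ext ω
  simp only [Set.mem_iInter, Set.mem_setOf_eq, Set.mem_iUnion, Set.mem_preimage]
  constructor
  · intro hω
    choose M hM1 hM2 using hω
    -- M as ℕ-indexed
    set M' : ℕ → ℕ := fun k => if h : k < n + 1 then M ⟨k, h⟩ else 0 with hM'def
    have hM'1 : ∀ k, k ≤ n → recTime X (k+1) ω = (M' k : ℕ∞) := by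
      intro k hk
      simpa [hM'def, hk, dif_pos (Nat.lt_succ_of_le hk)] using hM1 ⟨k, Nat.lt_succ_of_le hk⟩
    have hM'2 : ∀ k, (hk : k ≤ n) → X (M' k) ω = Yext y k := by
      intro k hk
      simp only [hM'def, dif_pos (Nat.lt_succ_of_le hk), Yext]
      exact hM2 ⟨k, Nat.lt_succ_of_le hk⟩
    have hM0 : M' 0 = 1 := by
      have := hM'1 0 (by omega)
      have h1 : recTime X 1 ω = (1 : ℕ∞) := rfl
      rw [h1] at this
      exact_mod_cast this.symm
    have hMlt : ∀ k, k < n → M' k < M' (k+1) := by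
      intro k hk
      exact ((rec_facts X ω k (M' k) (M' (k+1)) (hM'1 k (by omega)) (hM'1 (k+1) (by omega))).1).1
    refine ⟨fun i => M' (i.1+1) - M' i.1 - 1, ?_⟩
    have hT : ∀ k, k ≤ n → T (Gext (fun i : Fin n => M' (i.1+1) - M' i.1 - 1)) k = M' k := by
      intro k hk
      induction k with
      | zero => simpa [T_zero] using hM0.symm
      | succ k ih =>
        have hkn : k < n := by omega
        show T _ k + Gext _ k + 1 = M' (k+1)
        rw [ih (by omega), Gext, dif_pos hkn]
        have := hMlt k hkn
        simp only
        omega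
    rw [mem_cyl_iff X y hymono]
    intro k hk
    rw [hT k hk]
    exact ⟨hM'1 k hk, hM'2 k hk⟩
  · rintro ⟨g, hg⟩
    rw [mem_cyl_iff X y hymono] at hg
    intro i
    obtain ⟨h1, h2⟩ := hg i.1 (by omega)
    refine ⟨T (Gext g) i.1, h1, ?_⟩
    rw [h2, Yext, dif_pos i.2]

lemma Gext_eq {n : ℕ} (g : Fin n → ℕ) (i : Fin n) : Gext g i.1 = g i := by
  rw [Gext, dif_pos i.2]

lemma event_disjoint (hymono : StrictMono y) :
    Pairwise (Function.onFun Disjoint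
      (fun g : Fin n → ℕ => ⋂ j ∈ Finset.Icc 1 (T (Gext g) n), X j ⁻¹' B n y (Gext g) j)) := by
  intro g g' hne
  rw [Function.onFun, Set.disjoint_left]
  intro ω hω hω'
  apply hne
  simp only [Set.mem_iInter, Set.mem_preimage] at hω hω'
  have h1 := (mem_cyl_iff X y hymono (Gext g) ω).1 hω
  have h2 := (mem_cyl_iff X y hymono (Gext g') ω).1 hω'
  have hT : ∀ k, k ≤ n → T (Gext g) k = T (Gext g') k := by
    intro k hk
    have e1 := (h1 k hk).1
    have e2 := (h2 k hk).1
    rw [e1] at e2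
    exact_mod_cast e2
  funext i
  have hk1 := hT i.1 (le_of_lt i.2)
  have hk2 := hT (i.1 + 1) i.2
  have e1 : T (Gext g) (i.1 + 1) = T (Gext g) i.1 + Gext g i.1 + 1 := rfl
  have e2 : T (Gext g') (i.1 + 1) = T (Gext g') i.1 + Gext g' i.1 + 1 := rfl
  have : Gext g i.1 = Gext g' i.1 := by omega
  rwa [Gext_eq, Gext_eq] at this

lemma Icc_disjoint_Ioc {a b c : ℕ} : Disjoint (Finset.Icc a b) (Finset.Ioc b c) := by
  rw [Finset.disjoint_left]
  intro x hx hx'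
  rw [Finset.mem_Icc] at hx
  rw [Finset.mem_Ioc] at hx'
  omega

lemma prod_B (μ : Measure ℝ) (G : ℕ → ℕ) :
    ∀ K, K ≤ n → ∏ j ∈ Finset.Icc 1 (T G K), μ (B n y G j) =
      μ {Yext y 0} * ∏ k ∈ Finset.range K,
        ((μ (Set.Iic (Yext y k))) ^ (G k) * μ {Yext y (k+1)}) := by
  intro K
  induction K with
  | zero =>
    intro _
    rw [T_zero, Finset.Icc_self, Finset.prod_singleton, Finset.range_zero, Finset.prod_empty,
      mul_one]
    have : (1 : ℕ) = T G 0 := rfl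
    rw [this, B_at_T n y G (Nat.zero_le n)]
  | succ K ih =>
    intro hK
    have hKn : K ≤ n := by omega
    have hsplit : Finset.Icc 1 (T G K) ∪ Finset.Ioc (T G K) (T G (K+1)) =
        Finset.Icc 1 (T G (K+1)) := by
      have h1 := one_le_T G K
      have h2 := T_lt_succ G K
      ext x
      simp only [Finset.mem_union, Finset.mem_Icc, Finset.mem_Ioc]
      omega
    rw [← hsplit, Finset.prod_union Icc_disjoint_Ioc, ih hKn]
    have hIoc : ∏ j ∈ Finset.Ioc (T G K) (T G (K+1)), μ (B n y G j) =
        (μ (Set.Iic (Yext y K))) ^ (G K) * μ {Yext y (K+1)} := by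
      rw [← Finset.Ioo_insert_right (T_lt_succ G K), Finset.prod_insert (by simp)]
      rw [B_at_T n y G hK]
      have hcongr : ∏ j ∈ Finset.Ioo (T G K) (T G (K+1)), μ (B n y G j) =
          ∏ _j ∈ Finset.Ioo (T G K) (T G (K+1)), μ (Set.Iic (Yext y K)) := by
        refine Finset.prod_congr rfl fun j hj => ?_
        rw [Finset.mem_Ioo] at hj
        rw [B_at_Ioo n y G hKn hj.1 hj.2]
      rw [hcongr, Finset.prod_const, Nat.card_Ioo]
      have hcard : T G (K+1) - T G K - 1 = G K := by
        have : T G (K+1) = T G K + G K + 1 := rfl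
        omega
      rw [hcard, mul_comm]
    rw [hIoc, Finset.prod_range_succ]
    ring

lemma tsum_pi_prod : ∀ (N : ℕ) (h : Fin N → ℕ → ℝ≥0∞),
    ∑' g : Fin N → ℕ, ∏ i, h i (g i) = ∏ i, ∑' m, h i m := by
  intro N
  induction N with
  | zero =>
    intro h
    rw [Fin.prod_univ_zero]
    have : ∀ g : Fin 0 → ℕ, (∏ i : Fin 0, h i (g i)) = 1 := fun g => Fin.prod_univ_zero _
    rw [tsum_congr this]
    exact tsum_eq_single (fun _ => 0) fun b hb => absurd (Subsingleton.elim b _) hb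
  | succ N ih =>
    intro h
    have e := ((Fin.consEquiv (fun _ : Fin (N+1) => ℕ)).tsum_eq (fun g : Fin (N+1) → ℕ => ∏ i, h i (g i)))
    rw [← e]
    have : ∀ p : ℕ × (Fin N → ℕ),
        ∏ i, h i ((Fin.consEquiv (fun _ : Fin (N+1) => ℕ)) p i) =
        h 0 p.1 * ∏ i : Fin N, h i.succ (p.2 i) := by
      intro p
      rw [Fin.prod_univ_succ]
      simp [Fin.consEquiv]
    rw [tsum_congr this, ENNReal.tsum_prod']
    have : ∀ a : ℕ, ∑' b : Fin N → ℕ, h 0 a * ∏ i : Fin N, h i.succ (b i) =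
        h 0 a * ∏ i : Fin N, ∑' m, h i.succ m := by
      intro a
      rw [ENNReal.tsum_mul_left, ih]
    rw [tsum_congr this, ENNReal.tsum_mul_right, Fin.prod_univ_succ]

end Core
end Stmt19Aux

/-- for iid discrete real random variables with strictly positive mass
function `f` on a countable support `V`, cdf `F` and discrete hazard
`r(x) = f(x)/(1-F(x))`, for `y₁ < ⋯ < y_{n+1}` in `V`:
`P(X⁽¹⁾=y₁, …, X⁽ⁿ⁺¹⁾=y_{n+1}) = (∏_{i=1}^{n} r(yᵢ)) f(y_{n+1})`. -/
theorem stmt19 {Ω : Type*} [MeasureSpace Ω] [IsProbabilityMeasure (ℙ : Measure Ω)]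
    (X : ℕ → Ω → ℝ) (hXmeas : ∀ i, Measurable (X i))
    (hindep : iIndepFun X ℙ)
    (hident : ∀ i, Measure.map (X i) ℙ = Measure.map (X 1) ℙ)
    (V : Set ℝ) (hV : V.Countable)
    (hsupp : ℙ {ω | X 1 ω ∈ V} = 1)
    (f : ℝ → ℝ) (hf : ∀ x, f x = (Measure.map (X 1) ℙ {x}).toReal)
    (hfpos : ∀ x ∈ V, 0 < f x)
    (F : ℝ → ℝ) (hF : ∀ x, F x = (Measure.map (X 1) ℙ (Set.Iic x)).toReal)
    (n : ℕ) (y : Fin (n + 1) → ℝ) (hymem : ∀ i, y i ∈ V) (hymono : StrictMono y) :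
    ℙ (⋂ i : Fin (n + 1),
        {ω | ∃ m : ℕ, recTime X (i.1 + 1) ω = (m : ℕ∞) ∧ X m ω = y i}) =
      ENNReal.ofReal
        ((∏ i : Fin n, f (y i.castSucc) / (1 - F (y i.castSucc))) *
          f (y (Fin.last n))) := by
  classical
  set μ := Measure.map (X 1) ℙ with hμdef
  have hμprob : IsProbabilityMeasure μ := Measure.isProbabilityMeasure_map (hXmeas 1).aemeasurable
  have hμs : ∀ x : ℝ, μ {x} = ENNReal.ofReal (f x) := fun x => by
    rw [hf x, ENNReal.ofReal_toReal (measure_ne_top μ _)]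
  have hμI : ∀ x : ℝ, μ (Set.Iic x) = ENNReal.ofReal (F x) := fun x => by
    rw [hF x, ENNReal.ofReal_toReal (measure_ne_top μ _)]
  have hf0 : ∀ x : ℝ, 0 ≤ f x := fun x => by rw [hf x]; exact ENNReal.toReal_nonneg
  have hF0 : ∀ x : ℝ, 0 ≤ F x := fun x => by rw [hF x]; exact ENNReal.toReal_nonneg
  have hpos : ∀ i : Fin n, 0 < 1 - F (y i.castSucc) := by
    intro i
    have hy2 : y i.castSucc < y i.succ := hymono (Fin.castSucc_lt_succ (i := i))
    have hd : Disjoint (Set.Iic (y i.castSucc)) {y i.succ} := by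
      rw [Set.disjoint_singleton_right, Set.mem_Iic]
      exact not_le.2 hy2
    have hle : μ (Set.Iic (y i.castSucc)) + μ {y i.succ} ≤ 1 := by
      rw [← measure_union hd (measurableSet_singleton _)]
      exact prob_le_one
    rw [hμI, hμs, ← ENNReal.ofReal_add (hF0 _) (hf0 _), ← ENNReal.ofReal_one,
      ENNReal.ofReal_le_ofReal_iff zero_le_one] at hle
    have := hfpos _ (hymem i.succ)
    linarith
  rw [Stmt19Aux.event_eq X y hymono]
  rw [measure_iUnion (Stmt19Aux.event_disjoint X y hymono)
    (fun g => Finset.measurableSet_biInter _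
      (fun j _ => (hXmeas j) (Stmt19Aux.B_measurable n y _ j)))]
  have hper : ∀ g : Fin n → ℕ,
      ℙ (⋂ j ∈ Finset.Icc 1 (Stmt19Aux.T (Stmt19Aux.Gext g) n),
          X j ⁻¹' Stmt19Aux.B n y (Stmt19Aux.Gext g) j)
      = μ {Stmt19Aux.Yext y 0} * ∏ i : Fin n,
          ((μ (Set.Iic (Stmt19Aux.Yext y i.1))) ^ (g i) * μ {Stmt19Aux.Yext y (i.1+1)}) := by
    intro g
    rw [hindep.meas_biInter
      (fun j _ => ⟨Stmt19Aux.B n y (Stmt19Aux.Gext g) j, Stmt19Aux.B_measurable n y _ j, rfl⟩)]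
    have hc : ∀ j ∈ Finset.Icc 1 (Stmt19Aux.T (Stmt19Aux.Gext g) n),
        ℙ (X j ⁻¹' Stmt19Aux.B n y (Stmt19Aux.Gext g) j)
          = μ (Stmt19Aux.B n y (Stmt19Aux.Gext g) j) := by
      intro j _
      calc ℙ (X j ⁻¹' Stmt19Aux.B n y (Stmt19Aux.Gext g) j)
          = Measure.map (X j) ℙ (Stmt19Aux.B n y (Stmt19Aux.Gext g) j) :=
            (Measure.map_apply (hXmeas j) (Stmt19Aux.B_measurable n y _ j)).symm
        _ = μ (Stmt19Aux.B n y (Stmt19Aux.Gext g) j) := by rw [hident j]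
    rw [Finset.prod_congr rfl hc, Stmt19Aux.prod_B y μ (Stmt19Aux.Gext g) n le_rfl]
    congr 1
    rw [← Fin.prod_univ_eq_prod_range
      (fun k => (μ (Set.Iic (Stmt19Aux.Yext y k))) ^ (Stmt19Aux.Gext g k)
        * μ {Stmt19Aux.Yext y (k+1)}) n]
    exact Finset.prod_congr rfl fun i _ => by rw [Stmt19Aux.Gext_eq]
  rw [tsum_congr hper, ENNReal.tsum_mul_left,
    Stmt19Aux.tsum_pi_prod n
      (fun i m => (μ (Set.Iic (Stmt19Aux.Yext y i.1))) ^ m * μ {Stmt19Aux.Yext y (i.1+1)})]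
  have hgeo : ∀ i : Fin n,
      (∑' m : ℕ, (μ (Set.Iic (Stmt19Aux.Yext y i.1))) ^ m * μ {Stmt19Aux.Yext y (i.1+1)})
      = (1 - μ (Set.Iic (Stmt19Aux.Yext y i.1)))⁻¹ * μ {Stmt19Aux.Yext y (i.1+1)} := by
    intro i
    rw [ENNReal.tsum_mul_right, ENNReal.tsum_geometric]
  rw [Finset.prod_congr rfl fun i _ => hgeo i]
  have hY0 : Stmt19Aux.Yext y 0 = y 0 := by
    rw [Stmt19Aux.Yext, dif_pos (Nat.succ_pos n)]
    exact congrArg y (Fin.ext rfl)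
  have hYc : ∀ i : Fin n, Stmt19Aux.Yext y i.1 = y i.castSucc := by
    intro i
    rw [Stmt19Aux.Yext, dif_pos (by omega : i.1 < n + 1)]
    exact congrArg y (Fin.ext rfl)
  have hYs : ∀ i : Fin n, Stmt19Aux.Yext y (i.1 + 1) = y i.succ := by
    intro i
    rw [Stmt19Aux.Yext, dif_pos (by omega : i.1 + 1 < n + 1)]
    exact congrArg y (Fin.ext rfl)
  simp only [hY0, hYc, hYs]
  -- RHS conversion
  have hRHS : ENNReal.ofReal
      ((∏ i : Fin n, f (y i.castSucc) / (1 - F (y i.castSucc))) * f (y (Fin.last n)))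
      = (∏ i : Fin n, (μ {y i.castSucc} * (1 - μ (Set.Iic (y i.castSucc)))⁻¹))
        * μ {y (Fin.last n)} := by
    have hnn : ∀ i ∈ (Finset.univ : Finset (Fin n)),
        0 ≤ f (y i.castSucc) / (1 - F (y i.castSucc)) :=
      fun i _ => div_nonneg (hf0 _) (le_of_lt (hpos i))
    rw [ENNReal.ofReal_mul (Finset.prod_nonneg hnn), ENNReal.ofReal_prod_of_nonneg hnn,
      hμs (y (Fin.last n))]
    congr 1
    refine Finset.prod_congr rfl fun i _ => ?_
    rw [div_eq_mul_inv, ENNReal.ofReal_mul (hf0 _), hμs]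
    congr 1
    rw [ENNReal.ofReal_inv_of_pos (hpos i), hμI, ENNReal.ofReal_sub 1 (hF0 _),
      ENNReal.ofReal_one]
  rw [hRHS]
  -- final ENNReal algebra
  rw [Finset.prod_mul_distrib, Finset.prod_mul_distrib]
  have h1 : ∏ i : Fin (n+1), μ {y i} = μ {y 0} * ∏ i : Fin n, μ {y i.succ} :=
    Fin.prod_univ_succ _
  have h2 : ∏ i : Fin (n+1), μ {y i} = (∏ i : Fin n, μ {y i.castSucc}) * μ {y (Fin.last n)} :=
    Fin.prod_univ_castSucc _
  calc μ {y 0} * ((∏ i : Fin n, (1 - μ (Set.Iic (y i.castSucc)))⁻¹)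
          * ∏ i : Fin n, μ {y i.succ})
      = (∏ i : Fin n, (1 - μ (Set.Iic (y i.castSucc)))⁻¹)
          * (μ {y 0} * ∏ i : Fin n, μ {y i.succ}) := by ring
    _ = (∏ i : Fin n, (1 - μ (Set.Iic (y i.castSucc)))⁻¹) * ∏ i : Fin (n+1), μ {y i} := by
          rw [← h1]
    _ = (∏ i : Fin n, (1 - μ (Set.Iic (y i.castSucc)))⁻¹)
          * ((∏ i : Fin n, μ {y i.castSucc}) * μ {y (Fin.last n)}) := by rw [h2]
    _ = (∏ i : Fin n, μ {y i.castSucc}) * (∏ i : Fin n, (1 - μ (Set.Iic (y i.castSucc)))⁻¹)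
          * μ {y (Fin.last n)} := by ring
end
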